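/- arXiv:1604.07699 — 2 statements merged into one kernel-verified Lean document; each statement's English description precedes it below -/
import Mathlib

section
/- Let u ∈ W^{1,p}_loc(E) satisfy, for all pairs of concentric cubes K_ρ(y) ⊂ K_R(y) ⊂ E, ∫_{K_ρ(y)} |Du|^p dx ≤ (γ/(R-ρ)^p) ∫_{K_R(y)} |u - u_R|^p dx with u_R = ⨍_{K_R(y)} u dx. Then for every q ∈ [Np/(N+p), p], there is a constant C_q = C_q(N,q,γ) such that ⨍_{K_ρ(y)} |Du|^p dx ≤ C_q (R/(R-ρ))^p (R/ρ)^N (⨍_{K_R(y)} |Du|^q dx)^{p/q}, by the Sobolev–Poincaré inequality. -/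
open MeasureTheory Set

/-- The open cube of edge `2ρ` centered at `y` in `ℝ^N`. -/
def cube (N : ℕ) (y : Fin N → ℝ) (ρ : ℝ) : Set (Fin N → ℝ) :=
  {x | ∀ i, |x i - y i| < ρ}

/-! Dividing the Caccioppoli inequality by `|K_ρ|` and bounding `⨍_{K_R} |u - u_R|^p` by
Sobolev–Poincaré leaves the factor `|K_R| / |K_ρ| = (R/ρ)^N`; together with
`R^p / (R - ρ)^p` this gives the claim with `C_q = γ C_{SP}(q)`. -/

theorem setAverage_le_of_setIntegral_le_mul {α : Type*} [MeasurableSpace α] {μ : Measure α}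
    {s t : Set α} {f g : α → ℝ} {a b : ℝ} (ht : μ t ≠ ⊤) (ha : 0 ≤ a)
    (hfg : ∫ x in s, f x ∂μ ≤ a * ∫ x in t, g x ∂μ) (hg : ⨍ x in t, g x ∂μ ≤ b) :
    ⨍ x in s, f x ∂μ ≤ μ.real t / μ.real s * a * b := by
  rw [← measure_smul_setAverage g ht, smul_eq_mul] at hfg
  calc ⨍ x in s, f x ∂μ = (μ.real s)⁻¹ * ∫ x in s, f x ∂μ := setAverage_eq μ f s
    _ ≤ (μ.real s)⁻¹ * (a * (μ.real t * ⨍ x in t, g x ∂μ)) := by gcongr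
    _ ≤ (μ.real s)⁻¹ * (a * (μ.real t * b)) := by gcongr
    _ = μ.real t / μ.real s * a * b := by ring

section Cube

variable {N : ℕ} (y : Fin N → ℝ) {ρ R : ℝ}

theorem cube_eq_ball (hρ : 0 < ρ) : cube N y ρ = Metric.ball y ρ := by
  ext x
  simp [cube, dist_pi_lt_iff hρ, Real.dist_eq]

theorem volume_cube (hρ : 0 < ρ) : volume (cube N y ρ) = ENNReal.ofReal ((2 * ρ) ^ N) := by
  rw [cube_eq_ball y hρ, Real.volume_pi_ball y hρ, Fintype.card_fin]

theorem measureReal_cube (hρ : 0 < ρ) : volume.real (cube N y ρ) = (2 * ρ) ^ N := by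
  rw [measureReal_def, volume_cube y hρ, ENNReal.toReal_ofReal (by positivity)]

theorem measureReal_cube_div_measureReal_cube (hρ : 0 < ρ) (hR : 0 < R) :
    volume.real (cube N y R) / volume.real (cube N y ρ) = (R / ρ) ^ (N : ℝ) := by
  rw [measureReal_cube y hR, measureReal_cube y hρ, ← div_pow,
    mul_div_mul_left _ _ two_ne_zero, Real.rpow_natCast]

end Cube

theorem stmt11_general (N : ℕ) (E : Set (Fin N → ℝ)) (p γ : ℝ)
    (hγ : 0 < γ)
    (u : (Fin N → ℝ) → ℝ) (Du : (Fin N → ℝ) → EuclideanSpace ℝ (Fin N))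
    (hCacc : ∀ (y : Fin N → ℝ) (ρ R : ℝ), 0 < ρ → ρ < R → cube N y R ⊆ E →
      (∫ x in cube N y ρ, ‖Du x‖ ^ p) ≤
        γ / (R - ρ) ^ p *
          ∫ x in cube N y R, |u x - ⨍ z in cube N y R, u z| ^ p)
    (CSP : ℝ → ℝ) (hCSP : ∀ q, 0 < CSP q)
    (hSP : ∀ q : ℝ, (N : ℝ) * p / ((N : ℝ) + p) ≤ q → q ≤ p →
      ∀ (y : Fin N → ℝ) (R : ℝ), 0 < R → cube N y R ⊆ E →
        (⨍ x in cube N y R, |u x - ⨍ z in cube N y R, u z| ^ p) ≤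
          CSP q * R ^ p * (⨍ x in cube N y R, ‖Du x‖ ^ q) ^ (p / q)) :
    ∀ q : ℝ, (N : ℝ) * p / ((N : ℝ) + p) ≤ q → q ≤ p →
      ∃ Cq : ℝ, 0 < Cq ∧
        ∀ (y : Fin N → ℝ) (ρ R : ℝ), 0 < ρ → ρ < R → cube N y R ⊆ E →
          (⨍ x in cube N y ρ, ‖Du x‖ ^ p) ≤
            Cq * (R / (R - ρ)) ^ p * (R / ρ) ^ (N : ℝ) *
              (⨍ x in cube N y R, ‖Du x‖ ^ q) ^ (p / q) := by
  intro q hq₁ hq₂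
  refine ⟨γ * CSP q, mul_pos hγ (hCSP q), fun y ρ R hρ hρR hsub => ?_⟩
  have hR : 0 < R := hρ.trans hρR
  calc (⨍ x in cube N y ρ, ‖Du x‖ ^ p)
      ≤ volume.real (cube N y R) / volume.real (cube N y ρ) * (γ / (R - ρ) ^ p) *
          (CSP q * R ^ p * (⨍ x in cube N y R, ‖Du x‖ ^ q) ^ (p / q)) :=
        setAverage_le_of_setIntegral_le_mul
          (by rw [volume_cube y hR]; exact ENNReal.ofReal_ne_top) (by positivity)
          (hCacc y ρ R hρ hρR hsub) (hSP q hq₁ hq₂ y R hR hsub)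
    _ = γ * CSP q * (R / (R - ρ)) ^ p * (R / ρ) ^ (N : ℝ) *
          (⨍ x in cube N y R, ‖Du x‖ ^ q) ^ (p / q) := by
        rw [measureReal_cube_div_measureReal_cube y hρ hR,
          Real.div_rpow hR.le (sub_pos.2 hρR).le]
        ring

/-- Suppose `u` (with gradient `Du`) satisfies the Caccioppoli-type
inequality `∫_{K_ρ} |Du|^p ≤ (γ/(R-ρ)^p) ∫_{K_R} |u-u_R|^p` on all concentric cubes
in `E`, and the Sobolev–Poincaré inequality
`⨍_{K_R} |u-u_R|^p ≤ C_{SP}(q) R^p (⨍_{K_R} |Du|^q)^{p/q}` holds for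
`q ∈ [Np/(N+p), p]`. Then for each such `q` there is `C_q` with
`⨍_{K_ρ} |Du|^p ≤ C_q (R/(R-ρ))^p (R/ρ)^N (⨍_{K_R} |Du|^q)^{p/q}`. -/
theorem stmt11 (N : ℕ) (E : Set (Fin N → ℝ)) (hE : IsOpen E) (p γ : ℝ)
    (hp : 1 < p) (hγ : 0 < γ)
    (u : (Fin N → ℝ) → ℝ) (Du : (Fin N → ℝ) → EuclideanSpace ℝ (Fin N))
    (hCacc : ∀ (y : Fin N → ℝ) (ρ R : ℝ), 0 < ρ → ρ < R → cube N y R ⊆ E →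
      (∫ x in cube N y ρ, ‖Du x‖ ^ p) ≤
        γ / (R - ρ) ^ p *
          ∫ x in cube N y R, |u x - ⨍ z in cube N y R, u z| ^ p)
    (CSP : ℝ → ℝ) (hCSP : ∀ q, 0 < CSP q)
    (hSP : ∀ q : ℝ, (N : ℝ) * p / ((N : ℝ) + p) ≤ q → q ≤ p →
      ∀ (y : Fin N → ℝ) (R : ℝ), 0 < R → cube N y R ⊆ E →
        (⨍ x in cube N y R, |u x - ⨍ z in cube N y R, u z| ^ p) ≤
          CSP q * R ^ p * (⨍ x in cube N y R, ‖Du x‖ ^ q) ^ (p / q)) :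
    ∀ q : ℝ, (N : ℝ) * p / ((N : ℝ) + p) ≤ q → q ≤ p →
      ∃ Cq : ℝ, 0 < Cq ∧
        ∀ (y : Fin N → ℝ) (ρ R : ℝ), 0 < ρ → ρ < R → cube N y R ⊆ E →
          (⨍ x in cube N y ρ, ‖Du x‖ ^ p) ≤
            Cq * (R / (R - ρ)) ^ p * (R / ρ) ^ (N : ℝ) *
              (⨍ x in cube N y R, ‖Du x‖ ^ q) ^ (p / q) :=
  stmt11_general N E p γ hγ u Du hCacc CSP hCSP hSP
end

section
/- Suppose a nonnegative measurable function u on a cube satisfies, for some constants C > 0, ε ∈ (0,1), the decay |[u < 2^{-j²}] ∩ K_ρ| / |K_ρ| ≤ j^{-jε} for all integers j ≥ j*. Then there exist constants C', t* > 0 such that for all 0 < t < t*, |[u < t] ∩ K_ρ| / |K_ρ| ≤ C' / |ln t|^{(ε/2)|ln t|^{1/2}}. -/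
/-!
Given small `t`, put `L = |ln t|` and `j = ⌈√L⌉`. Since `j² ln 2 ≤ (√L + 1)² ln 2 ≤ L` once
`L ≥ 36`, we have `t ≤ 2^{-j²}`, so `[u < t] ⊆ [u < 2^{-j²}]` and the hypothesis bounds the
measure ratio by `j^{-jε}`. As `x ↦ x^{-xε}` decreases on `[1, ∞)` and `j ≥ √L`, this is at
most `(√L)^{-ε√L} = L^{-(ε/2)√L}`.
-/

open MeasureTheory Set

open Real

lemma cube_subset_closedBall (N : ℕ) (y : Fin N → ℝ) (ρ : ℝ) :
    cube N y ρ ⊆ Metric.closedBall y |ρ| := fun x hx =>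
  (dist_pi_le_iff (abs_nonneg ρ)).2 fun i => by
    rw [Real.dist_eq]
    exact (hx i).le.trans (le_abs_self ρ)

lemma volume_cube_ne_top (N : ℕ) (y : Fin N → ℝ) (ρ : ℝ) : volume (cube N y ρ) ≠ ⊤ :=
  ((measure_mono (cube_subset_closedBall N y ρ)).trans_lt measure_closedBall_lt_top).ne

lemma toReal_measure_inter_div_le_of_subset {α : Type*} [MeasurableSpace α] (μ : Measure α)
    {A B K : Set α} (hK : μ K ≠ ⊤) (hAB : A ⊆ B) :
    (μ (A ∩ K)).toReal / (μ K).toReal ≤ (μ (B ∩ K)).toReal / (μ K).toReal := by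
  refine div_le_div_of_nonneg_right (ENNReal.toReal_mono ?_ ?_) ENNReal.toReal_nonneg
  · exact ne_top_of_le_ne_top hK (measure_mono inter_subset_right)
  · exact measure_mono (inter_subset_inter_left K hAB)

lemma natCeil_sqrt_sq_mul_log_two_le {L : ℝ} (hL : 36 ≤ L) :
    (⌈√L⌉₊ : ℝ) ^ 2 * log 2 ≤ L := by
  have hs : 6 ≤ √L := (le_sqrt (by norm_num) (by linarith)).2 (by linarith)
  have hj : (⌈√L⌉₊ : ℝ) < √L + 1 := Nat.ceil_lt_add_one (sqrt_nonneg L)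
  have hlog2 : log 2 < 0.6931472 := lt_trans log_two_lt_d9 (by norm_num)
  calc (⌈√L⌉₊ : ℝ) ^ 2 * log 2 ≤ (√L + 1) ^ 2 * 0.6931472 := by
        gcongr
    _ ≤ √L ^ 2 := by nlinarith
    _ = L := sq_sqrt (by linarith)

lemma le_two_rpow_neg_natCeil_sqrt_sq {t : ℝ} (ht : 0 < t) (h : 36 ≤ -log t) :
    t ≤ (2 : ℝ) ^ (-((⌈√(-log t)⌉₊ : ℝ) ^ 2)) := by
  rw [rpow_def_of_pos two_pos, ← exp_log ht, exp_le_exp, exp_log ht]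
  linarith [natCeil_sqrt_sq_mul_log_two_le h]

lemma rpow_neg_mul_self_le {ε s x : ℝ} (hε : 0 ≤ ε) (hs : 1 ≤ s) (hsx : s ≤ x) :
    x ^ (-(x * ε)) ≤ s ^ (-(s * ε)) :=
  calc x ^ (-(x * ε)) ≤ x ^ (-(s * ε)) :=
        rpow_le_rpow_of_exponent_le (hs.trans hsx) (by nlinarith)
    _ ≤ s ^ (-(s * ε)) := rpow_le_rpow_of_nonpos (by linarith) hsx (by nlinarith)

lemma sqrt_rpow_neg_mul_self {L : ℝ} (hL : 0 ≤ L) (ε : ℝ) :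
    √L ^ (-(√L * ε)) = 1 / L ^ ((ε / 2) * L ^ ((1 : ℝ) / 2)) := by
  rw [one_div, ← rpow_neg hL, ← sqrt_eq_rpow, sqrt_eq_rpow, ← rpow_mul hL]
  ring_nf

theorem stmt15_general (N : ℕ) (y : Fin N → ℝ) (ρ : ℝ)
    (u : (Fin N → ℝ) → ℝ)
    (ε : ℝ) (hε : 0 < ε) (jstar : ℕ)
    (hdecay : ∀ j : ℕ, jstar ≤ j →
      (volume ({x | u x < (2 : ℝ) ^ (-((j : ℝ) ^ 2))} ∩ cube N y ρ)).toReal /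
          (volume (cube N y ρ)).toReal ≤ (j : ℝ) ^ (-((j : ℝ) * ε))) :
    ∃ C' tstar : ℝ, 0 < C' ∧ 0 < tstar ∧
      ∀ t : ℝ, 0 < t → t < tstar →
        (volume ({x | u x < t} ∩ cube N y ρ)).toReal /
            (volume (cube N y ρ)).toReal ≤
          C' / |Real.log t| ^ ((ε / 2) * |Real.log t| ^ ((1 : ℝ) / 2)) := by
  set M : ℝ := max 36 (((jstar : ℝ) + 1) ^ 2)
  refine ⟨1, exp (-M), one_pos, exp_pos _, fun t ht htM => ?_⟩
  have hML : M < -log t := by linarith [(log_lt_iff_lt_exp ht).2 htM]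
  have h36 : 36 ≤ -log t := (le_max_left _ _).trans hML.le
  rw [abs_of_neg (by linarith : log t < 0)]
  set j := ⌈√(-log t)⌉₊
  have hsj : √(-log t) ≤ j := Nat.le_ceil _
  have hjstar : jstar ≤ j := by
    have : (jstar : ℝ) + 1 ≤ √(-log t) :=
      (le_sqrt (by positivity) (by linarith)).2 ((le_max_right _ _).trans hML.le)
    exact_mod_cast (by linarith : (jstar : ℝ) ≤ j)
  have hs1 : 1 ≤ √(-log t) := (le_sqrt zero_le_one (by linarith)).2 (by linarith)
  calc _ ≤ (volume ({x | u x < (2 : ℝ) ^ (-((j : ℝ) ^ 2))} ∩ cube N y ρ)).toReal /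
          (volume (cube N y ρ)).toReal :=
        toReal_measure_inter_div_le_of_subset _ (volume_cube_ne_top N y ρ)
          fun x hx => lt_of_lt_of_le hx (le_two_rpow_neg_natCeil_sqrt_sq ht h36)
    _ ≤ (j : ℝ) ^ (-((j : ℝ) * ε)) := hdecay j hjstar
    _ ≤ √(-log t) ^ (-(√(-log t) * ε)) := rpow_neg_mul_self_le hε.le hs1 hsj
    _ = _ := sqrt_rpow_neg_mul_self (by linarith) ε

/-- If a nonnegative measurable `u` on a cube satisfies
`|[u < 2^{-j²}] ∩ K_ρ|/|K_ρ| ≤ j^{-jε}` for all integers `j ≥ j*`, then there are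
`C', t* > 0` such that for `0 < t < t*`,
`|[u < t] ∩ K_ρ|/|K_ρ| ≤ C'/|ln t|^{(ε/2)|ln t|^{1/2}}`. -/
theorem stmt15 (N : ℕ) (y : Fin N → ℝ) (ρ : ℝ) (hρ : 0 < ρ)
    (u : (Fin N → ℝ) → ℝ) (hu : Measurable u)
    (hnonneg : ∀ x ∈ cube N y ρ, 0 ≤ u x)
    (C ε : ℝ) (hC : 0 < C) (hε : 0 < ε) (hε1 : ε < 1) (jstar : ℕ)
    (hdecay : ∀ j : ℕ, jstar ≤ j →
      (volume ({x | u x < (2 : ℝ) ^ (-((j : ℝ) ^ 2))} ∩ cube N y ρ)).toReal /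
          (volume (cube N y ρ)).toReal ≤ (j : ℝ) ^ (-((j : ℝ) * ε))) :
    ∃ C' tstar : ℝ, 0 < C' ∧ 0 < tstar ∧
      ∀ t : ℝ, 0 < t → t < tstar →
        (volume ({x | u x < t} ∩ cube N y ρ)).toReal /
            (volume (cube N y ρ)).toReal ≤
          C' / |Real.log t| ^ ((ε / 2) * |Real.log t| ^ ((1 : ℝ) / 2)) :=
  stmt15_general N y ρ u ε hε jstar hdecay
end
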